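/- arXiv:2003.13338 — 3 statements merged into one kernel-verified Lean document; each statement's English description precedes it below -/
import Mathlib

section
/- Let N = (V, A, c) be a network, let y, z ∈ V be distinct vertices, and let x ∈ V be any vertex. Then λ^N_{yz}(x) = φ^N_{yz}(x), i.e. the minimum, over all maximum-length sequences of arc-disjoint paths from y to z in N, of the number of paths in the sequence passing through x equals the difference φ^N_{yz} − φ^{N_x}_{yz} between the maximum flow value from y to z in N and the maximum flow value from y to z in the network N_x obtained from N by setting to zero the capacity of every arc incident to x. -/
/-!
Networks on the complete digraph: capacities `c : V → V → ℕ` with no loops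
(arcs are ordered pairs of distinct vertices; loops are given capacity 0).
-/

structure Network (V : Type*) where
  c : V → V → ℕ
  no_loop : ∀ v, c v v = 0

namespace NetFlow

variable {V : Type*} [Fintype V] [DecidableEq V]

/-- `f` is a flow from `y` to `z` in `N`. -/
def IsFlow (N : Network V) (y z : V) (f : V → V → ℕ) : Prop :=
  (∀ u v, f u v ≤ N.c u v) ∧
  (∀ x, x ≠ y → x ≠ z → ∑ u, f u x = ∑ u, f x u)

/-- The value of a flow from `y`. -/
def flowValue (f : V → V → ℕ) (y : V) : ℤ :=
  (∑ u, (f y u : ℤ)) - ∑ u, (f u y : ℤ)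

/-- The maximum flow value `φ^N_{yz}`. -/
noncomputable def maxFlowValue (N : Network V) (y z : V) : ℕ :=
  sSup {m : ℕ | ∃ f, IsFlow N y z f ∧ flowValue f y = (m : ℤ)}

/-- `f` is a maximum flow from `y` to `z` in `N`. -/
def IsMaxFlow (N : Network V) (y z : V) (f : V → V → ℕ) : Prop :=
  IsFlow N y z f ∧ flowValue f y = (maxFlowValue N y z : ℤ)

/-- The network `N_X`: capacities of arcs incident to `X` are set to zero. -/
def removeVerts (N : Network V) (X : Finset V) : Network V where
  c u v := if u ∈ X ∨ v ∈ X then 0 else N.c u v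
  no_loop v := by simp [N.no_loop v]

/-- `φ^N_{yz}(X) = φ^N_{yz} - φ^{N_X}_{yz}`. -/
noncomputable def phiDrop (N : Network V) (y z : V) (X : Finset V) : ℤ :=
  (maxFlowValue N y z : ℤ) - (maxFlowValue (removeVerts N X) y z : ℤ)

/-- The (consecutive) arcs of a list of vertices. -/
def pathArcs (p : List V) : List (V × V) := p.zip p.tail

/-- `p` is a path from `y` to `z` in `N`: at least two distinct vertices, starting at `y`,
ending at `z`, with all consecutive arcs of positive capacity. -/
def IsPath (N : Network V) (y z : V) (p : List V) : Prop :=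
  2 ≤ p.length ∧ p.Nodup ∧ p.head? = some y ∧ p.getLast? = some z ∧
    p.Chain' fun u v => 1 ≤ N.c u v

/-- `p` is a cycle in `N`. -/
def IsCycle (N : Network V) (p : List V) : Prop :=
  3 ≤ p.length ∧ p.dropLast.Nodup ∧ p.head? = p.getLast? ∧
    p.Chain' fun u v => 1 ≤ N.c u v

/-- A sequence of arc-disjoint paths from `y` to `z` in `N`: each component is a path, and
each arc `a` is used by at most `c a` components. -/
def IsPathSeq (N : Network V) (y z : V) (γ : List (List V)) : Prop :=
  (∀ p ∈ γ, IsPath N y z p) ∧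
  ∀ u v : V, γ.countP (fun p => decide ((u, v) ∈ pathArcs p)) ≤ N.c u v

/-- `λ^N_{yz}`: the maximum length of a sequence of arc-disjoint paths from `y` to `z`. -/
noncomputable def maxSeqLen (N : Network V) (y z : V) : ℕ :=
  sSup {m : ℕ | ∃ γ : List (List V), IsPathSeq N y z γ ∧ γ.length = m}

/-- `M^N_{yz}`: the sequences of arc-disjoint paths from `y` to `z` of maximum length. -/
def MaxSeqs (N : Network V) (y z : V) : Set (List (List V)) :=
  {γ | IsPathSeq N y z γ ∧ γ.length = maxSeqLen N y z}

/-- `l_X(γ)`: the number of components of `γ` having a vertex in `X`. -/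
def lX (X : Finset V) (γ : List (List V)) : ℕ :=
  γ.countP fun p => p.any fun x => decide (x ∈ X)

/-- `λ^N_{yz}(X)`: the minimum of `l_X` over maximum-length sequences of arc-disjoint paths. -/
noncomputable def lambdaX (N : Network V) (y z : V) (X : Finset V) : ℕ :=
  sInf {n : ℕ | ∃ γ ∈ MaxSeqs N y z, lX X γ = n}

/-- The flow through a vertex: `f(x) = Σ_{a exiting x} f(a)` if `x ∉ {y,z}`, `v(f)` otherwise. -/
def vertexFlow (f : V → V → ℕ) (y z x : V) : ℤ :=
  if x = y ∨ x = z then flowValue f y else ∑ u, (f x u : ℤ)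

/-- `δ^N_{yz}(X)`: the minimum of `f(X) = Σ_{x∈X} f(x)` over maximum flows `f`. -/
noncomputable def deltaX (N : Network V) (y z : V) (X : Finset V) : ℕ :=
  sInf {n : ℕ | ∃ f, IsMaxFlow N y z f ∧ (∑ x ∈ X, vertexFlow f y z x) = (n : ℤ)}

/-- The flow `f_γ` associated with a sequence of arc-disjoint paths. -/
def seqFlow (γ : List (List V)) (u v : V) : ℕ :=
  γ.countP fun p => decide ((u, v) ∈ pathArcs p)

/-- The path (or cycle) function `χ_p` of a path or cycle `p`. -/
def chi (p : List V) (u v : V) : ℕ := (pathArcs p).count (u, v)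

/-- `(γ, w)` is a decomposition of the flow `f`: `γ` is a sequence of `v(f)` paths from `y`
to `z`, `w` a sequence of cycles, and `f = Σ_j χ_{γ_j} + Σ_j χ_{w_j}`. -/
def IsDecomposition (N : Network V) (y z : V) (f : V → V → ℕ)
    (γ w : List (List V)) : Prop :=
  (∀ p ∈ γ, IsPath N y z p) ∧ (∀ q ∈ w, IsCycle N q) ∧
  (γ.length : ℤ) = flowValue f y ∧
  ∀ u v : V, f u v = (γ.map fun p => chi p u v).sum + (w.map fun q => chi q u v).sum

/-- The forward arcs of a generalized path given by vertices `p` and directions `d`. -/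
def forwardArcs (p : List V) (d : List Bool) : List (V × V) :=
  ((p.zip p.tail).zip d).filterMap fun e => if e.2 then some e.1 else none

/-- The backward arcs of a generalized path given by vertices `p` and directions `d`. -/
def backwardArcs (p : List V) (d : List Bool) : List (V × V) :=
  ((p.zip p.tail).zip d).filterMap fun e => if e.2 then none else some (e.1.2, e.1.1)

/-- `(p, d)` is a generalized path from `y` to `z`: distinct vertices `x_1 = y, …, x_m = z`
(`m ≥ 2`), the `i`-th arc being `(x_i, x_{i+1})` (forward, `d_i = true`) or `(x_{i+1}, x_i)`
(backward, `d_i = false`). -/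
def IsGenPath (y z : V) (p : List V) (d : List Bool) : Prop :=
  2 ≤ p.length ∧ p.Nodup ∧ p.head? = some y ∧ p.getLast? = some z ∧
    d.length + 1 = p.length

/-- `(p, d)` is an augmenting path for `f` from `y` to `z` in `N`. -/
def IsAugPath (N : Network V) (y z : V) (f : V → V → ℕ)
    (p : List V) (d : List Bool) : Prop :=
  IsGenPath y z p d ∧
  (∀ a ∈ forwardArcs p d, f a.1 a.2 < N.c a.1 a.2) ∧
  (∀ a ∈ backwardArcs p d, 1 ≤ f a.1 a.2)

/-- `χ_σ` for a generalized path `σ = (p, d)`: `+1` on forward arcs, `-1` on backward arcs. -/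
def chiGen (p : List V) (d : List Bool) (u v : V) : ℤ :=
  ((forwardArcs p d).count (u, v) : ℤ) - ((backwardArcs p d).count (u, v) : ℤ)

/-- The full flow vitality group centrality measure `φ^N(X)`. -/
noncomputable def phiGC (N : Network V) (X : Finset V) : ℝ :=
  ∑ a ∈ Finset.univ.filter (fun a : V × V => a.1 ≠ a.2 ∧ 0 < maxFlowValue N a.1 a.2),
    (phiDrop N a.1 a.2 X : ℝ) / (maxFlowValue N a.1 a.2 : ℝ)

/-- The full flow betweenness group centrality measure `λ^N(X)`. -/
noncomputable def lambdaGC (N : Network V) (X : Finset V) : ℝ :=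
  ∑ a ∈ Finset.univ.filter (fun a : V × V => a.1 ≠ a.2 ∧ 0 < maxFlowValue N a.1 a.2),
    (lambdaX N a.1 a.2 X : ℝ) / (maxFlowValue N a.1 a.2 : ℝ)

end NetFlow

/-!
Paths of a maximum sequence that avoid `x` form a sequence of arc-disjoint paths in `N_x`, so
at least `φ - φ_x` of them meet `x`; this uses `λ = φ`, obtained by peeling paths off a maximum
flow. Conversely, a maximum flow of `N_x` sends nothing out of `x`; augmenting it `φ - φ_x` times
along simple residual paths raises the outflow of `x` by at most one each time, and peeling paths
off the resulting maximum flow of `N` gives a maximum sequence with at most `φ - φ_x` paths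
through `x` (for `x = z` there is nothing to do, since `φ_z = 0`).
-/

namespace NetFlow

section Arcs

variable {V : Type*}

lemma pathArcs_cons_cons (a b : V) (l : List V) :
    pathArcs (a :: b :: l) = (a, b) :: pathArcs (b :: l) := rfl

lemma map_fst_pathArcs (p : List V) : (pathArcs p).map Prod.fst = p.dropLast := by
  induction p with
  | nil => rfl
  | cons a l ih =>
    cases l with
    | nil => rfl
    | cons b l => rw [pathArcs_cons_cons, List.map_cons, ih, List.dropLast_cons_cons]

lemma map_snd_pathArcs (p : List V) : (pathArcs p).map Prod.snd = p.tail :=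
  List.map_snd_zip (by simp)

lemma mem_of_mem_pathArcs {p : List V} {u v : V} (h : (u, v) ∈ pathArcs p) :
    u ∈ p ∧ v ∈ p :=
  (List.of_mem_zip h).imp_right List.mem_of_mem_tail

lemma rel_of_mem_pathArcs {R : V → V → Prop} {p : List V} (hp : p.IsChain R) {u v : V}
    (h : (u, v) ∈ pathArcs p) : R u v := by
  induction p with
  | nil => simp [pathArcs] at h
  | cons a l ih =>
    cases l with
    | nil => simp [pathArcs] at h
    | cons b l =>
      rw [List.isChain_cons_cons] at hp
      rcases List.mem_cons.1 h with h | h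
      · obtain ⟨rfl, rfl⟩ := Prod.mk.inj h
        exact hp.1
      · exact ih hp.2 h

lemma pathArcs_nodup {p : List V} (hp : p.Nodup) : (pathArcs p).Nodup :=
  List.Nodup.of_map Prod.fst <| map_fst_pathArcs p ▸ hp.sublist (List.dropLast_sublist p)

variable [DecidableEq V]

lemma chi_le_one {p : List V} (hp : p.Nodup) (u v : V) : chi p u v ≤ 1 :=
  List.nodup_iff_count_le_one.1 (pathArcs_nodup hp) _

lemma chi_eq_ite {p : List V} (hp : p.Nodup) (u v : V) :
    chi p u v = if (u, v) ∈ pathArcs p then 1 else 0 :=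
  (pathArcs_nodup hp).count

lemma mem_pathArcs_of_chi_pos {p : List V} {u v : V} (h : 0 < chi p u v) :
    (u, v) ∈ pathArcs p :=
  List.count_pos_iff.1 h

lemma chi_le_of_isChain {f : V → V → ℕ} {p : List V} (hp : p.Nodup)
    (hc : p.IsChain fun u v => 1 ≤ f u v) : chi p ≤ f := fun u v => by
  rw [chi_eq_ite hp]
  split_ifs with h
  · exact rel_of_mem_pathArcs hc h
  · exact Nat.zero_le _

lemma seqFlow_cons {p : List V} (hp : p.Nodup) (γ : List (List V)) :
    seqFlow (p :: γ) = seqFlow γ + chi p := by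
  funext u v
  simp [seqFlow, List.countP_cons, chi_eq_ite hp]

lemma count_tail_add {p : List V} {y : V} (hy : p.head? = some y) (x : V) :
    p.tail.count x + (if x = y then 1 else 0) = p.count x := by
  obtain ⟨l, rfl⟩ : ∃ l, p = y :: l := by
    cases p with
    | nil => simp at hy
    | cons a l => exact ⟨l, by simpa using hy⟩
  simp [List.count_cons, @eq_comm _ x]

lemma count_dropLast_add {p : List V} {z : V} (hz : p.getLast? = some z) (x : V) :
    p.dropLast.count x + (if x = z then 1 else 0) = p.count x := by
  obtain ⟨l, rfl⟩ : ∃ l, p = l ++ [z] := by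
    rw [List.getLast?_eq_some_iff] at hz
    exact hz
  simp [List.count_append, List.count_singleton, @eq_comm _ x]

variable [Fintype V]

lemma sum_count_fst (l : List (V × V)) (x : V) :
    ∑ u, l.count (x, u) = (l.map Prod.fst).count x := by
  induction l with
  | nil => simp
  | cons a l ih =>
    obtain ⟨a, b⟩ := a
    by_cases h : a = x <;> simp [List.count_cons, Finset.sum_add_distrib, ih, h]

lemma sum_count_snd (l : List (V × V)) (x : V) :
    ∑ u, l.count (u, x) = (l.map Prod.snd).count x := by
  induction l with
  | nil => simp
  | cons a l ih =>
    obtain ⟨a, b⟩ := a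
    by_cases h : b = x <;> simp [List.count_cons, Finset.sum_add_distrib, ih, h]

lemma sum_chi_left (p : List V) (x : V) : ∑ u, chi p x u = p.dropLast.count x := by
  rw [← map_fst_pathArcs]; exact sum_count_fst _ x

lemma sum_chi_right (p : List V) (x : V) : ∑ u, chi p u x = p.tail.count x := by
  rw [← map_snd_pathArcs]; exact sum_count_snd _ x

end Arcs

section Flows

variable {V : Type*} [Fintype V] {N : Network V} {y z : V} {f : V → V → ℕ}

lemma flowValue_add (f g : V → V → ℕ) (x : V) :
    flowValue (f + g) x = flowValue f x + flowValue g x := by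
  simp only [flowValue, Pi.add_apply, Nat.cast_add, Finset.sum_add_distrib]
  ring

lemma flowValue_sub {g : V → V → ℕ} (h : g ≤ f) (x : V) :
    flowValue (f - g) x = flowValue f x - flowValue g x := by
  simp only [flowValue, Pi.sub_apply, Nat.cast_sub (h _ _), Finset.sum_sub_distrib]
  ring

lemma flowValue_swap (f : V → V → ℕ) (x : V) :
    flowValue (Function.swap f) x = -flowValue f x := by
  simp [flowValue]

-- `flowValue f x` is the net outflow of `f` at any vertex `x`, not only at the source.
lemma isFlow_iff :
    IsFlow N y z f ↔ f ≤ N.c ∧ ∀ x, x ≠ y → x ≠ z → flowValue f x = 0 := by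
  simp only [IsFlow, flowValue, sub_eq_zero, ← Nat.cast_sum, Nat.cast_inj,
    @eq_comm _ (∑ u, f u _)]
  rfl

lemma IsFlow.flowValue_eq_zero (hf : IsFlow N y z f) {x : V} (hy : x ≠ y) (hz : x ≠ z) :
    flowValue f x = 0 :=
  (isFlow_iff.1 hf).2 x hy hz

lemma flowValue_le_sum_capacity (hf : f ≤ N.c) : flowValue f y ≤ ∑ u, (N.c y u : ℤ) := by
  have hout : ∑ u, (f y u : ℤ) ≤ ∑ u, (N.c y u : ℤ) := by
    gcongr with u
    exact_mod_cast hf y u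
  have hin : 0 ≤ ∑ u, (f u y : ℤ) := by positivity
  unfold flowValue
  linarith

lemma bddAbove_flowValues (N : Network V) (y z : V) :
    BddAbove {m : ℕ | ∃ f, IsFlow N y z f ∧ flowValue f y = m} :=
  ⟨∑ u, N.c y u, fun m ⟨_, hf, hm⟩ => by
    have := flowValue_le_sum_capacity (y := y) hf.1
    rw [hm] at this
    exact_mod_cast this⟩

lemma le_maxFlowValue (hf : IsFlow N y z f) {m : ℕ} (hm : flowValue f y = m) :
    m ≤ maxFlowValue N y z :=
  le_csSup (bddAbove_flowValues N y z) ⟨f, hf, hm⟩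

lemma exists_isMaxFlow (N : Network V) (y z : V) : ∃ f, IsMaxFlow N y z f :=
  Nat.sSup_mem (s := {m : ℕ | ∃ f, IsFlow N y z f ∧ flowValue f y = m})
    ⟨0, 0, ⟨fun _ _ => Nat.zero_le _, fun _ _ _ => rfl⟩, by simp [flowValue]⟩
    (bddAbove_flowValues N y z)

variable [DecidableEq V]

lemma flowValue_eq_sum_cut (hf : IsFlow N y z f) {S : Finset V} (hy : y ∈ S) (hz : z ∉ S) :
    flowValue f y = ∑ u ∈ S, ∑ v ∈ Sᶜ, ((f u v : ℤ) - f v u) := by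
  have hS : flowValue f y = ∑ x ∈ S, flowValue f x :=
    (Finset.sum_eq_single_of_mem y hy fun x hx hxy =>
      hf.flowValue_eq_zero hxy (ne_of_mem_of_not_mem hx hz)).symm
  have hSS : ∑ u ∈ S, ∑ v ∈ S, ((f u v : ℤ) - f v u) = 0 := by
    simp only [Finset.sum_sub_distrib]
    rw [Finset.sum_comm (f := fun u v => (f v u : ℤ)), sub_self]
  rw [hS, ← add_zero (∑ u ∈ S, ∑ v ∈ Sᶜ, _), ← hSS, ← Finset.sum_add_distrib]
  refine Finset.sum_congr rfl fun x _ => ?_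
  rw [add_comm, Finset.sum_add_sum_compl, flowValue, Finset.sum_sub_distrib]

lemma flowValue_le_cut (hf : IsFlow N y z f) {S : Finset V} (hy : y ∈ S) (hz : z ∉ S) :
    flowValue f y ≤ ∑ u ∈ S, ∑ v ∈ Sᶜ, (N.c u v : ℤ) := by
  rw [flowValue_eq_sum_cut hf hy hz]
  gcongr with u _ v _
  have := hf.1 u v
  omega

end Flows

section Reachability

variable {V : Type*} {R : V → V → Prop}

lemma exists_nodup_isChain_of_reflTransGen {a b : V} (h : Relation.ReflTransGen R a b) :
    ∃ p : List V, p.Nodup ∧ p.head? = some a ∧ p.getLast? = some b ∧ p.IsChain R := by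
  induction h with
  | refl => exact ⟨[a], List.nodup_singleton a, rfl, rfl, List.isChain_singleton a⟩
  | @tail c b _ hcb ih =>
    obtain ⟨p, hn, hh, hl, hc⟩ := ih
    by_cases hb : b ∈ p
    · obtain ⟨q, r, rfl⟩ := List.append_of_mem hb
      have hpre : q ++ [b] <+: q ++ b :: r := ⟨r, by simp⟩
      refine ⟨q ++ [b], hn.sublist hpre.sublist, ?_, by simp, hc.prefix hpre⟩
      cases q <;> simpa using hh
    · refine ⟨p ++ [b], ?_, ?_, by simp, hc.append (List.isChain_singleton b) ?_⟩
      · simpa [List.nodup_append, hn] using fun x hx (hxb : x = b) => hb (hxb ▸ hx)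
      · cases p <;> simp_all
      · simpa [hl] using hcb

lemma two_le_length_of_head?_of_getLast? {p : List V} {a b : V} (hab : a ≠ b)
    (ha : p.head? = some a) (hb : p.getLast? = some b) : 2 ≤ p.length := by
  rcases p with _ | ⟨c, _ | ⟨d, l⟩⟩
  · simp at ha
  · simp_all
  · simp

variable [Fintype V] {y z : V}

lemma reflTransGen_of_forall_cut
    (h : ∀ S : Finset V, y ∈ S → z ∉ S → ∃ u ∈ S, ∃ v ∉ S, R u v) :
    Relation.ReflTransGen R y z := by
  classical
  by_contra hyz
  obtain ⟨u, hu, v, hv, huv⟩ :=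
    h (Finset.univ.filter (Relation.ReflTransGen R y)) (by simp [Relation.ReflTransGen.refl])
      (by simpa using hyz)
  simp only [Finset.mem_filter, Finset.mem_univ, true_and] at hu hv
  exact hv (hu.tail huv)

lemma exists_path_of_forall_cut (hyz : y ≠ z)
    (h : ∀ S : Finset V, y ∈ S → z ∉ S → ∃ u ∈ S, ∃ v ∉ S, R u v) :
    ∃ p : List V, 2 ≤ p.length ∧ p.Nodup ∧ p.head? = some y ∧ p.getLast? = some z ∧
      p.IsChain R := by
  obtain ⟨p, hn, hh, hl, hc⟩ :=
    exists_nodup_isChain_of_reflTransGen (reflTransGen_of_forall_cut h)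
  exact ⟨p, two_le_length_of_head?_of_getLast? hyz hh hl, hn, hh, hl, hc⟩

end Reachability

section PathSeqs

variable {V : Type*} [Fintype V] [DecidableEq V] {N : Network V} {y z : V}
  {f : V → V → ℕ} {γ : List (List V)}

lemma flowValue_chi {p : List V} (hy : p.head? = some y) (hz : p.getLast? = some z) (x : V) :
    flowValue (chi p) x = (if x = y then 1 else 0) - (if x = z then 1 else 0) := by
  have h1 := count_tail_add hy x
  have h2 := count_dropLast_add hz x
  simp only [flowValue, ← Nat.cast_sum, sum_chi_left, sum_chi_right]
  split_ifs at h1 h2 ⊢ <;> omega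

lemma flowValue_seqFlow (hγ : ∀ p ∈ γ, IsPath N y z p) (x : V) :
    flowValue (seqFlow γ) x =
      γ.length * ((if x = y then 1 else 0) - (if x = z then 1 else 0)) := by
  induction γ with
  | nil => simp [seqFlow, flowValue]
  | cons p γ ih =>
    obtain ⟨-, hn, hh, hl, -⟩ := hγ p List.mem_cons_self
    rw [seqFlow_cons hn, flowValue_add, ih fun q hq => hγ q (List.mem_cons_of_mem p hq),
      flowValue_chi hh hl]
    push_cast [List.length_cons]
    ring

lemma IsPathSeq.isFlow (h : IsPathSeq N y z γ) : IsFlow N y z (seqFlow γ) :=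
  isFlow_iff.2 ⟨fun u v => h.2 u v, fun x hy hz => by simp [flowValue_seqFlow h.1, hy, hz]⟩

lemma IsPathSeq.length_le_maxFlowValue (hyz : y ≠ z) (h : IsPathSeq N y z γ) :
    γ.length ≤ maxFlowValue N y z :=
  le_maxFlowValue h.isFlow (by simp [flowValue_seqFlow h.1, hyz])

lemma isFlow_sub_chi (hyz : y ≠ z) (hf : IsFlow N y z f) {p : List V} (hle : chi p ≤ f)
    (hy : p.head? = some y) (hz : p.getLast? = some z) :
    IsFlow N y z (f - chi p) ∧ flowValue (f - chi p) y = flowValue f y - 1 := by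
  refine ⟨isFlow_iff.2 ⟨tsub_le_self.trans hf.1, fun x hxy hxz => ?_⟩, ?_⟩
  · rw [flowValue_sub hle, hf.flowValue_eq_zero hxy hxz, flowValue_chi hy hz]
    simp [hxy, hxz]
  · rw [flowValue_sub hle, flowValue_chi hy hz]
    simp [hyz]

lemma exists_path_of_flowValue_pos (hyz : y ≠ z) (hf : IsFlow N y z f)
    (hpos : 0 < flowValue f y) :
    ∃ p : List V, 2 ≤ p.length ∧ p.Nodup ∧ p.head? = some y ∧ p.getLast? = some z ∧
      p.IsChain fun u v => 1 ≤ f u v := by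
  refine exists_path_of_forall_cut hyz fun S hy hz => ?_
  by_contra! h
  have : flowValue f y ≤ 0 := by
    rw [flowValue_eq_sum_cut hf hy hz]
    refine Finset.sum_nonpos fun u hu => Finset.sum_nonpos fun v hv => ?_
    have := h u hu v (Finset.mem_compl.1 hv)
    omega
  omega

lemma exists_isPathSeq_seqFlow_le (hyz : y ≠ z) (n : ℕ) :
    ∀ f, IsFlow N y z f → flowValue f y = n →
      ∃ γ, IsPathSeq N y z γ ∧ γ.length = n ∧ seqFlow γ ≤ f := by
  induction n with
  | zero =>
    exact fun f _ _ =>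
      ⟨[], ⟨by simp, fun _ _ => Nat.zero_le _⟩, rfl, fun _ _ => Nat.zero_le _⟩
  | succ n ih =>
    intro f hf hv
    obtain ⟨p, hlen, hn, hh, hl, hc⟩ := exists_path_of_flowValue_pos hyz hf (by omega)
    have hle := chi_le_of_isChain hn hc
    obtain ⟨hf', hv'⟩ := isFlow_sub_chi hyz hf hle hh hl
    obtain ⟨γ, hγ, hγn, hγf⟩ := ih _ hf' (by omega)
    have hp : IsPath N y z p := ⟨hlen, hn, hh, hl, hc.imp fun u v huv => huv.trans (hf.1 u v)⟩
    have hpγ : seqFlow (p :: γ) ≤ f := by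
      rw [seqFlow_cons hn, ← tsub_add_cancel_of_le hle]
      exact add_le_add hγf le_rfl
    refine ⟨p :: γ, ⟨?_, fun u v => (hpγ u v).trans (hf.1 u v)⟩, by simp [hγn], hpγ⟩
    simpa [hp] using hγ.1

lemma maxSeqLen_eq_maxFlowValue (hyz : y ≠ z) : maxSeqLen N y z = maxFlowValue N y z := by
  refine le_antisymm (csSup_le' fun m ⟨γ, hγ, hm⟩ => hm ▸ hγ.length_le_maxFlowValue hyz) ?_
  obtain ⟨f, hf, hv⟩ := exists_isMaxFlow N y z
  obtain ⟨γ, hγ, hlen, -⟩ := exists_isPathSeq_seqFlow_le hyz _ f hf hv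
  exact le_csSup ⟨_, fun m ⟨γ, hγ, hm⟩ => hm ▸ hγ.length_le_maxFlowValue hyz⟩
    ⟨γ, hγ, hlen⟩

lemma mem_maxSeqs_iff (hyz : y ≠ z) :
    γ ∈ MaxSeqs N y z ↔ IsPathSeq N y z γ ∧ γ.length = maxFlowValue N y z := by
  rw [MaxSeqs, Set.mem_ofPred_eq, maxSeqLen_eq_maxFlowValue hyz]

lemma exists_mem_maxSeqs_seqFlow_le (hyz : y ≠ z) (hf : IsMaxFlow N y z f) :
    ∃ γ ∈ MaxSeqs N y z, seqFlow γ ≤ f := by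
  obtain ⟨γ, hγ, hlen, hle⟩ := exists_isPathSeq_seqFlow_le hyz _ f hf.1 hf.2
  exact ⟨γ, (mem_maxSeqs_iff hyz).2 ⟨hγ, hlen⟩, hle⟩

lemma lX_singleton_le_sum_seqFlow (hγ : ∀ p ∈ γ, IsPath N y z p) {x : V} (hxz : x ≠ z) :
    lX {x} γ ≤ ∑ u, seqFlow γ x u := by
  induction γ with
  | nil => simp [lX]
  | cons p γ ih =>
    obtain ⟨-, hn, -, hl, -⟩ := hγ p List.mem_cons_self
    have hγ' := ih fun q hq => hγ q (List.mem_cons_of_mem p hq)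
    have hx := count_dropLast_add hl x
    rw [if_neg hxz] at hx
    rw [seqFlow_cons hn]
    simp only [lX, List.countP_cons, Pi.add_apply, Finset.sum_add_distrib, sum_chi_left] at hγ' ⊢
    split_ifs with hxp
    · have : 0 < p.count x := List.count_pos_iff.2 (by simpa using hxp)
      omega
    · omega

end PathSeqs

section Augmentation

variable {V : Type*} [DecidableEq V] {N : Network V} {f : V → V → ℕ} {p : List V}

def IsResidualArc (N : Network V) (f : V → V → ℕ) (u v : V) : Prop :=
  f u v < N.c u v ∨ 0 < f v u

def pushArcs (N : Network V) (f : V → V → ℕ) (p : List V) : V → V → ℕ :=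
  fun u v => if f u v < N.c u v then chi p u v else 0

def cancelArcs (N : Network V) (f : V → V → ℕ) (p : List V) : V → V → ℕ :=
  fun u v => if f u v < N.c u v then 0 else chi p u v

/-- Augmentation along a residual path `p`: each arc of `p` either carries one more unit of
flow, or, when it is saturated, one unit of flow on its reverse is cancelled. -/
def augment (N : Network V) (f : V → V → ℕ) (p : List V) : V → V → ℕ :=
  f + pushArcs N f p - Function.swap (cancelArcs N f p)

lemma pushArcs_add_cancelArcs : pushArcs N f p + cancelArcs N f p = chi p := by
  funext u v
  simp only [Pi.add_apply, pushArcs, cancelArcs]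
  split_ifs <;> simp

lemma swap_cancelArcs_le (hp : p.Nodup) (hres : p.IsChain (IsResidualArc N f)) :
    Function.swap (cancelArcs N f p) ≤ f := fun u v => by
  simp only [Function.swap, cancelArcs]
  split_ifs with h
  · exact Nat.zero_le _
  · rcases Nat.eq_zero_or_pos (chi p v u) with h0 | hpos
    · simp [h0]
    · rcases rel_of_mem_pathArcs hres (mem_pathArcs_of_chi_pos hpos) with h' | h'
      · exact absurd h' h
      · exact (chi_le_one hp v u).trans h'

lemma augment_add_swap_cancelArcs (hp : p.Nodup) (hres : p.IsChain (IsResidualArc N f)) :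
    augment N f p + Function.swap (cancelArcs N f p) = f + pushArcs N f p :=
  tsub_add_cancel_of_le ((swap_cancelArcs_le hp hres).trans le_self_add)

lemma augment_le_add_chi : augment N f p ≤ f + chi p := fun u v => by
  refine tsub_le_self.trans (add_le_add le_rfl ?_)
  simp only [pushArcs]
  split_ifs <;> simp

lemma augment_le_capacity (hf : f ≤ N.c) (hp : p.Nodup) : augment N f p ≤ N.c := fun u v => by
  refine tsub_le_self.trans ?_
  simp only [Pi.add_apply, pushArcs]
  split_ifs with h
  · have := chi_le_one hp u v
    omega
  · simpa using hf u v

variable [Fintype V] {y z : V}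

lemma flowValue_augment (hp : p.Nodup) (hres : p.IsChain (IsResidualArc N f)) (x : V) :
    flowValue (augment N f p) x = flowValue f x + flowValue (chi p) x := by
  have h := congrArg (flowValue · x) (augment_add_swap_cancelArcs hp hres)
  simp only [flowValue_add, flowValue_swap] at h
  rw [← pushArcs_add_cancelArcs (N := N) (f := f), flowValue_add]
  linarith

lemma isFlow_augment (hyz : y ≠ z) (hf : IsFlow N y z f) (hp : p.Nodup)
    (hy : p.head? = some y) (hz : p.getLast? = some z) (hres : p.IsChain (IsResidualArc N f)) :
    IsFlow N y z (augment N f p) ∧ flowValue (augment N f p) y = flowValue f y + 1 := by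
  refine ⟨isFlow_iff.2 ⟨augment_le_capacity hf.1 hp, fun x hxy hxz => ?_⟩, ?_⟩
  · rw [flowValue_augment hp hres, hf.flowValue_eq_zero hxy hxz, flowValue_chi hy hz]
    simp [hxy, hxz]
  · rw [flowValue_augment hp hres, flowValue_chi hy hz]
    simp [hyz]

lemma sum_augment_le (hp : p.Nodup) (x : V) : ∑ u, augment N f p x u ≤ ∑ u, f x u + 1 := by
  have h : ∑ u, augment N f p x u ≤ ∑ u, f x u + p.dropLast.count x := by
    rw [← sum_chi_left, ← Finset.sum_add_distrib]
    exact Finset.sum_le_sum fun u _ => augment_le_add_chi x u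
  have := List.nodup_iff_count_le_one.1 (hp.sublist (List.dropLast_sublist p)) x
  omega

lemma exists_residual_path (hyz : y ≠ z) (hf : IsFlow N y z f)
    (hlt : flowValue f y < maxFlowValue N y z) :
    ∃ p : List V, 2 ≤ p.length ∧ p.Nodup ∧ p.head? = some y ∧ p.getLast? = some z ∧
      p.IsChain (IsResidualArc N f) := by
  refine exists_path_of_forall_cut hyz fun S hy hz => ?_
  by_contra! h
  obtain ⟨g, hg, hgv⟩ := exists_isMaxFlow N y z
  have hsat : flowValue f y = ∑ u ∈ S, ∑ v ∈ Sᶜ, (N.c u v : ℤ) := by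
    rw [flowValue_eq_sum_cut hf hy hz]
    refine Finset.sum_congr rfl fun u hu => Finset.sum_congr rfl fun v hv => ?_
    have hres := h u hu v (Finset.mem_compl.1 hv)
    simp only [IsResidualArc, not_or, not_lt] at hres
    have := hf.1 u v
    omega
  have := flowValue_le_cut hg hy hz
  omega

lemma exists_isMaxFlow_sum_le (hyz : y ≠ z) (x : V) (k : ℕ) :
    ∀ g, IsFlow N y z g → flowValue g y + k = maxFlowValue N y z →
      ∃ f, IsMaxFlow N y z f ∧ ∑ u, f x u ≤ ∑ u, g x u + k := by
  induction k with
  | zero => exact fun g hg hv => ⟨g, ⟨hg, by simpa using hv⟩, le_rfl⟩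
  | succ k ih =>
    intro g hg hv
    obtain ⟨p, -, hn, hh, hl, hres⟩ := exists_residual_path hyz hg (by omega)
    obtain ⟨hg', hv'⟩ := isFlow_augment hyz hg hn hh hl hres
    obtain ⟨f, hf, hfx⟩ := ih _ hg' (by omega)
    have := sum_augment_le (N := N) (f := g) hn x
    exact ⟨f, hf, by omega⟩

end Augmentation

section VertexRemoval

variable {V : Type*} [DecidableEq V] {N : Network V} {y z : V} {γ : List (List V)}

lemma removeVerts_c_le (N : Network V) (X : Finset V) : (removeVerts N X).c ≤ N.c :=
  fun u v => by
    simp only [removeVerts]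
    split_ifs <;> simp

lemma IsPathSeq.sublist {γ' : List (List V)} (h : IsPathSeq N y z γ) (hs : γ'.Sublist γ) :
    IsPathSeq N y z γ' :=
  ⟨fun p hp => h.1 p (hs.subset hp), fun u v => hs.countP_le.trans (h.2 u v)⟩

lemma IsPathSeq.removeVerts {X : Finset V} (h : IsPathSeq N y z γ)
    (hX : ∀ p ∈ γ, ∀ v ∈ p, v ∉ X) : IsPathSeq (removeVerts N X) y z γ := by
  refine ⟨fun p hp => ?_, fun u v => ?_⟩
  · obtain ⟨h1, h2, h3, h4, h5⟩ := h.1 p hp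
    refine ⟨h1, h2, h3, h4, h5.imp_of_mem_imp fun a b ha hb hab => ?_⟩
    simpa [NetFlow.removeVerts, hX p hp a ha, hX p hp b hb] using hab
  · by_cases huv : u ∈ X ∨ v ∈ X
    · simp only [NetFlow.removeVerts, if_pos huv, Nat.le_zero, List.countP_eq_zero,
        decide_eq_true_eq]
      intro p hp harc
      obtain ⟨hu, hv⟩ := mem_of_mem_pathArcs harc
      exact huv.elim (hX p hp u hu) (hX p hp v hv)
    · simpa [NetFlow.removeVerts, huv] using h.2 u v

variable [Fintype V]

lemma IsFlow.of_removeVerts {X : Finset V} {f : V → V → ℕ}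
    (hf : IsFlow (removeVerts N X) y z f) : IsFlow N y z f :=
  ⟨fun u v => (hf.1 u v).trans (removeVerts_c_le N X u v), hf.2⟩

lemma maxFlowValue_removeVerts_target (hyz : y ≠ z) :
    maxFlowValue (removeVerts N {z}) y z = 0 := by
  obtain ⟨g, hg, hgv⟩ := exists_isMaxFlow (removeVerts N {z}) y z
  have hcut := flowValue_eq_sum_cut hg (S := {z}ᶜ) (by simpa using hyz) (by simp)
  have hz : ∀ u, g u z = 0 ∧ g z u = 0 := fun u =>
    ⟨Nat.le_zero.1 ((hg.1 u z).trans (by simp [removeVerts])),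
      Nat.le_zero.1 ((hg.1 z u).trans (by simp [removeVerts]))⟩
  simp [hz] at hcut
  omega

lemma phiDrop_singleton_le_lX (hyz : y ≠ z) (hγ : γ ∈ MaxSeqs N y z) (x : V) :
    phiDrop N y z {x} ≤ lX {x} γ := by
  rw [mem_maxSeqs_iff hyz] at hγ
  set P : List V → Bool := fun p => p.any fun v => decide (v ∈ ({x} : Finset V))
  have hsplit := List.length_eq_countP_add_countP P (l := γ)
  have hγx : IsPathSeq (removeVerts N {x}) y z (γ.filter fun p => ¬P p) := by
    refine (hγ.1.sublist List.filter_sublist).removeVerts fun p hp v hv hvx => ?_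
    simp only [List.mem_filter, decide_eq_true_eq] at hp
    simp only [Finset.mem_singleton] at hvx
    exact hp.2 (by simpa [P, hvx] using hv)
  have := hγx.length_le_maxFlowValue hyz
  rw [← List.countP_eq_length_filter] at this
  have hlX : lX {x} γ = γ.countP P := rfl
  unfold phiDrop
  omega

lemma exists_isMaxFlow_sum_le_phiDrop (hyz : y ≠ z) (x : V) :
    ∃ f, IsMaxFlow N y z f ∧ ((∑ u, f x u : ℕ) : ℤ) ≤ phiDrop N y z {x} := by
  obtain ⟨g, hg, hgv⟩ := exists_isMaxFlow (removeVerts N {x}) y z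
  have hgx : ∑ u, g x u = 0 :=
    Finset.sum_eq_zero fun u _ => Nat.le_zero.1 ((hg.1 x u).trans (by simp [removeVerts]))
  have hle := le_maxFlowValue hg.of_removeVerts hgv
  obtain ⟨f, hf, hfx⟩ := exists_isMaxFlow_sum_le hyz x
    (maxFlowValue N y z - maxFlowValue (removeVerts N {x}) y z) g hg.of_removeVerts
    (by rw [hgv]; omega)
  refine ⟨f, hf, ?_⟩
  rw [phiDrop]
  omega

lemma exists_mem_maxSeqs_lX_le (hyz : y ≠ z) (x : V) :
    ∃ γ ∈ MaxSeqs N y z, (lX {x} γ : ℤ) ≤ phiDrop N y z {x} := by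
  by_cases hxz : x = z
  · subst hxz
    obtain ⟨f, hf⟩ := exists_isMaxFlow N y x
    obtain ⟨γ, hγ, -⟩ := exists_mem_maxSeqs_seqFlow_le hyz hf
    refine ⟨γ, hγ, ?_⟩
    rw [phiDrop, maxFlowValue_removeVerts_target hyz, ← ((mem_maxSeqs_iff hyz).1 hγ).2,
      Nat.cast_zero, sub_zero]
    exact_mod_cast (List.countP_le_length : lX {x} γ ≤ γ.length)
  · obtain ⟨f, hf, hfx⟩ := exists_isMaxFlow_sum_le_phiDrop (N := N) hyz x
    obtain ⟨γ, hγ, hγf⟩ := exists_mem_maxSeqs_seqFlow_le hyz hf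
    have hγx := lX_singleton_le_sum_seqFlow ((mem_maxSeqs_iff hyz).1 hγ).1.1 hxz
    refine ⟨γ, hγ, le_trans ?_ hfx⟩
    exact_mod_cast hγx.trans (Finset.sum_le_sum fun u _ => hγf x u)

end VertexRemoval

end NetFlow

theorem lambda_eq_phiDrop_singleton_general {V : Type*} [Fintype V] [DecidableEq V]
    (N : Network V) (y z x : V) (hyz : y ≠ z) :
    (NetFlow.lambdaX N y z {x} : ℤ) = NetFlow.phiDrop N y z {x} := by
  obtain ⟨γ, hγ, hγx⟩ := NetFlow.exists_mem_maxSeqs_lX_le (N := N) hyz x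
  have hmem : NetFlow.lX {x} γ ∈ {n | ∃ γ ∈ NetFlow.MaxSeqs N y z, NetFlow.lX {x} γ = n} :=
    ⟨γ, hγ, rfl⟩
  obtain ⟨γ₀, hγ₀, hmin⟩ := Nat.sInf_mem ⟨_, hmem⟩
  apply le_antisymm
  · exact (Nat.cast_le.2 (Nat.sInf_le hmem)).trans hγx
  · rw [NetFlow.lambdaX, ← hmin]
    exact NetFlow.phiDrop_singleton_le_lX hyz hγ₀ x

/-- `λ^N_{yz}(x) = φ^N_{yz}(x)` for every vertex `x`. -/
theorem lambda_eq_phiDrop_singleton {V : Type*} [Fintype V] [DecidableEq V]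
    (hV : 2 ≤ Fintype.card V) (N : Network V) (y z x : V) (hyz : y ≠ z) :
    (NetFlow.lambdaX N y z {x} : ℤ) = NetFlow.phiDrop N y z {x} :=
  lambda_eq_phiDrop_singleton_general N y z x hyz
end

section
/- There exist a network N = (V, A, c), a subset X ⊆ V with |X| = 2, and distinct vertices y, z ∈ V such that λ^N_{yz}(X) > φ^N_{yz}(X). (Concretely, one may take V = {y, u₁, u₂, v₁, v₂, x₁, x₂, z}, X = {x₁, x₂}, and capacity 1 on exactly the arcs (y,u₁), (y,u₂), (y,v₂), (u₁,v₁), (u₂,v₂), (u₂,x₂), (u₁,x₁), (x₂,v₁), (v₁,z), (v₂,z), (x₁,z), and capacity 0 elsewhere; then φ^N_{yz}(X) = 1 while λ^N_{yz}(X) = 2.) -/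
/-!
In the example network the three arcs leaving `y` have capacity 1, so `φ_{yz} = 3`,
and in `N_X` only the arcs `(v₁,z)` and `(v₂,z)` enter `z`, so `φ_{yz}(X) = 3 - 2 = 1`. Three
arc-disjoint paths must use all three arcs leaving `y`. The path through `(y,v₂)` occupies
`(v₂,z)`, so the path through `u₂` must go `u₂ → x₂ → v₁ → z`; it occupies `(v₁,z)`, so the path
through `u₁` must go `u₁ → x₁ → z`. Hence every maximum sequence meets `X` twice.
-/

theorem List.length_le_sum_countP {α ι : Type*} (l : List α) (s : Finset ι) (q : ι → α → Bool)
    (h : ∀ a ∈ l, ∃ i ∈ s, q i a) : l.length ≤ ∑ i ∈ s, l.countP (q i) := by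
  induction l with
  | nil => simp
  | cons a t ih =>
    obtain ⟨i, hi, hqi⟩ := h a List.mem_cons_self
    have hone : 1 ≤ ∑ j ∈ s, if q j a then 1 else 0 :=
      calc 1 = if q i a then 1 else 0 := by simp [hqi]
        _ ≤ _ := Finset.single_le_sum (f := fun j => if q j a then 1 else 0)
          (fun j _ => Nat.zero_le _) hi
    have ht := ih fun b hb => h b (List.mem_cons_of_mem a hb)
    simp only [List.countP_cons, Finset.sum_add_distrib, List.length_cons]
    omega

namespace NetFlow

section Flows

variable {V : Type*} [Fintype V] {N : Network V} {y z : V} {f : V → V → ℕ}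

theorem IsFlow.flowValue_le_sum_cap_out (hf : IsFlow N y z f) :
    flowValue f y ≤ ((∑ u, N.c y u : ℕ) : ℤ) := by
  have hout : ∑ u, (f y u : ℤ) ≤ ∑ u, (N.c y u : ℤ) :=
    Finset.sum_le_sum fun u _ => by exact_mod_cast hf.1 y u
  have hin : (0 : ℤ) ≤ ∑ u, (f u y : ℤ) := Finset.sum_nonneg fun u _ => by positivity
  push_cast
  unfold flowValue
  omega

theorem IsFlow.flowValue_eq_netInflow (hyz : y ≠ z) (hf : IsFlow N y z f) :
    flowValue f y = ∑ u, (f u z : ℤ) - ∑ u, (f z u : ℤ) := by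
  set netOut : V → ℤ := fun x => ∑ u, (f x u : ℤ) - ∑ u, (f u x : ℤ)
  have htotal : ∑ x, netOut x = 0 := by
    simp only [netOut, Finset.sum_sub_distrib]
    rw [Finset.sum_comm, sub_self]
  have hconserved : ∀ x, x ≠ y ∧ x ≠ z → netOut x = 0 := fun x hx => by
    have hx' : ∑ u, (f u x : ℤ) = ∑ u, (f x u : ℤ) := by exact_mod_cast hf.2 x hx.1 hx.2
    show ∑ u, (f x u : ℤ) - ∑ u, (f u x : ℤ) = 0
    rw [hx', sub_self]
  rw [Fintype.sum_eq_add y z hyz hconserved] at htotal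
  change netOut y = _
  linarith

theorem IsFlow.flowValue_le_sum_cap_in (hyz : y ≠ z) (hf : IsFlow N y z f) :
    flowValue f y ≤ ((∑ u, N.c u z : ℕ) : ℤ) := by
  have hin : ∑ u, (f u z : ℤ) ≤ ∑ u, (N.c u z : ℤ) :=
    Finset.sum_le_sum fun u _ => by exact_mod_cast hf.1 u z
  have hout : (0 : ℤ) ≤ ∑ u, (f z u : ℤ) := Finset.sum_nonneg fun u _ => by positivity
  rw [hf.flowValue_eq_netInflow hyz]
  push_cast
  omega

theorem maxFlowValue_eq_of_isFlow {m : ℕ} (hf : IsFlow N y z f) (hv : flowValue f y = m)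
    (hle : ∀ g, IsFlow N y z g → flowValue g y ≤ m) : maxFlowValue N y z = m := by
  refine IsGreatest.csSup_eq ⟨⟨f, hf, hv⟩, ?_⟩
  rintro m' ⟨g, hg, hv'⟩
  exact_mod_cast hv' ▸ hle g hg

end Flows

section Paths

variable {V : Type*} {N : Network V} {y z : V} {p : List V}

theorem IsPath.exists_arc_out (hp : IsPath N y z p) : ∃ w, (y, w) ∈ pathArcs p := by
  obtain ⟨hlen, -, hhead, -⟩ := hp
  match p, hlen, hhead with
  | a :: b :: t, _, hhead =>
    obtain rfl : a = y := by simpa using hhead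
    exact ⟨b, by simp [pathArcs]⟩

theorem IsPath.induction_from_target {S : V → List V → Prop} (hz : S z [z])
    (hcons : ∀ v w, 1 ≤ N.c v w → ∀ t, S w t → S v (v :: t)) (hp : IsPath N y z p) :
    S y p := by
  obtain ⟨-, -, hhead, hlast, hchain⟩ := hp
  rw [List.Chain'] at hchain
  induction p generalizing y with
  | nil => simp at hhead
  | cons a t ih =>
    obtain rfl : a = y := by simpa using hhead
    cases t with
    | nil =>
      obtain rfl : a = z := by simpa using hlast
      exact hz
    | cons b t =>
      rw [List.isChain_cons_cons] at hchain
      exact hcons a b hchain.1 _ (ih rfl (by simpa using hlast) hchain.2)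

variable [DecidableEq V] {γ : List (List V)}

theorem IsPathSeq.length_le_sum_cap_out [Fintype V] (hγ : IsPathSeq N y z γ) :
    γ.length ≤ ∑ u, N.c y u :=
  calc γ.length ≤ ∑ u, γ.countP (fun p => decide ((y, u) ∈ pathArcs p)) :=
        List.length_le_sum_countP γ Finset.univ _ fun p hp => by
          obtain ⟨w, hw⟩ := (hγ.1 p hp).exists_arc_out
          exact ⟨w, Finset.mem_univ w, by simpa using hw⟩
    _ ≤ ∑ u, N.c y u := Finset.sum_le_sum fun u _ => hγ.2 y u

theorem maxSeqLen_eq_of_isPathSeq (hγ : IsPathSeq N y z γ)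
    (hle : ∀ δ, IsPathSeq N y z δ → δ.length ≤ γ.length) : maxSeqLen N y z = γ.length := by
  refine IsGreatest.csSup_eq ⟨⟨γ, hγ, rfl⟩, ?_⟩
  rintro m ⟨δ, hδ, rfl⟩
  exact hle δ hδ

theorem le_lambdaX {X : Finset V} {k : ℕ} (hne : (MaxSeqs N y z).Nonempty)
    (hle : ∀ γ ∈ MaxSeqs N y z, k ≤ lX X γ) : k ≤ lambdaX N y z X := by
  obtain ⟨γ, hγ⟩ := hne
  refine le_csInf ⟨_, γ, hγ, rfl⟩ ?_
  rintro n ⟨δ, hδ, rfl⟩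
  exact hle δ hδ

end Paths

end NetFlow

namespace NetFlow.Counterexample

/-- Vertices `0, …, 7` are `y, u₁, u₂, v₁, v₂, x₁, x₂, z`. -/
def arcs : List (Fin 8 × Fin 8) :=
  [(0, 1), (0, 2), (0, 4), (1, 3), (1, 5), (2, 4), (2, 6), (3, 7), (4, 7), (5, 7), (6, 3)]

def net : Network (Fin 8) where
  c u v := if (u, v) ∈ arcs then 1 else 0
  no_loop := by decide

def groupX : Finset (Fin 8) := {5, 6}

def pathsToSink : Fin 8 → List (List (Fin 8)) :=
  ![[[0, 1, 3, 7], [0, 1, 5, 7], [0, 2, 4, 7], [0, 2, 6, 3, 7], [0, 4, 7]],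
    [[1, 3, 7], [1, 5, 7]],
    [[2, 4, 7], [2, 6, 3, 7]],
    [[3, 7]],
    [[4, 7]],
    [[5, 7]],
    [[6, 3, 7]],
    [[7]]]

theorem mem_pathsToSink {p : List (Fin 8)} (hp : IsPath net 0 7 p) : p ∈ pathsToSink 0 :=
  hp.induction_from_target (S := fun v p => p ∈ pathsToSink v) (by decide) (by decide)

def threePaths : List (List (Fin 8)) := [[0, 1, 5, 7], [0, 2, 6, 3, 7], [0, 4, 7]]

theorem isPathSeq_threePaths : IsPathSeq net 0 7 threePaths := by
  refine ⟨fun p hp => ?_, by decide⟩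
  simp only [threePaths, List.mem_cons, List.not_mem_nil, or_false] at hp
  rcases hp with rfl | rfl | rfl <;>
    exact ⟨by decide, by decide, rfl, rfl, show List.IsChain _ _ by decide⟩

theorem maxSeqLen_net : maxSeqLen net 0 7 = 3 :=
  maxSeqLen_eq_of_isPathSeq isPathSeq_threePaths fun _ hδ =>
    hδ.length_le_sum_cap_out.trans (by decide)

theorem maxFlowValue_net : maxFlowValue net 0 7 = 3 :=
  maxFlowValue_eq_of_isFlow (f := seqFlow threePaths) ⟨by decide, by decide⟩ (by decide)
    fun _ hg => hg.flowValue_le_sum_cap_out.trans (by decide)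

theorem maxFlowValue_removeVerts_net : maxFlowValue (removeVerts net groupX) 0 7 = 2 :=
  maxFlowValue_eq_of_isFlow (f := seqFlow [[0, 1, 3, 7], [0, 4, 7]]) ⟨by decide, by decide⟩
    (by decide) fun _ hg => (hg.flowValue_le_sum_cap_in (by decide)).trans (by decide)

theorem two_le_lX_of_mem_maxSeqs {γ : List (List (Fin 8))} (hγ : γ ∈ MaxSeqs net 0 7) :
    2 ≤ lX groupX γ := by
  obtain ⟨⟨hpaths, hcap⟩, hlen⟩ := hγ
  rw [maxSeqLen_net] at hlen
  obtain ⟨p₁, p₂, p₃, rfl⟩ := List.length_eq_three.mp hlen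
  have key : ∀ p₁ ∈ pathsToSink 0, ∀ p₂ ∈ pathsToSink 0, ∀ p₃ ∈ pathsToSink 0,
      (∀ u v, [p₁, p₂, p₃].countP (fun p => decide ((u, v) ∈ pathArcs p)) ≤ net.c u v) →
      2 ≤ lX groupX [p₁, p₂, p₃] := by decide
  exact key _ (mem_pathsToSink (hpaths _ (by simp))) _ (mem_pathsToSink (hpaths _ (by simp)))
    _ (mem_pathsToSink (hpaths _ (by simp))) hcap

theorem two_le_lambdaX_net : 2 ≤ lambdaX net 0 7 groupX :=
  le_lambdaX ⟨threePaths, isPathSeq_threePaths, maxSeqLen_net.symm⟩ fun _ =>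
    two_le_lX_of_mem_maxSeqs

end NetFlow.Counterexample

open NetFlow NetFlow.Counterexample

/-- there is a network, a two-element set `X` of vertices and distinct
vertices `y, z` with `λ^N_{yz}(X) > φ^N_{yz}(X)`. -/
theorem exists_lambda_gt_phiDrop :
    ∃ (N : Network (Fin 8)) (X : Finset (Fin 8)) (y z : Fin 8),
      y ≠ z ∧ X.card = 2 ∧ NetFlow.phiDrop N y z X < (NetFlow.lambdaX N y z X : ℤ) := by
  refine ⟨net, groupX, 0, 7, by decide, by decide, ?_⟩
  have hlambda : (2 : ℤ) ≤ lambdaX net 0 7 groupX := by exact_mod_cast two_le_lambdaX_net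
  rw [phiDrop, maxFlowValue_net, maxFlowValue_removeVerts_net]
  omega
end

section
/- There exist a network N = (V, A, c), a subset X ⊆ V and distinct vertices y, z ∈ V such that δ^N_{yz}(X) > λ^N_{yz}(X). (Concretely, one may take V = {y, x₁, u, x₂, z}, X = {x₁, x₂}, and capacity 1 on exactly the arcs (y,x₁), (x₁,u), (u,x₂), (x₂,z) and 0 elsewhere; then δ^N_{yz}(X) = 2 while λ^N_{yz}(X) = 1.) -/
/-!
Take the network `0 → 1 → 2 → 3 → 4` (the paper's `y → x₁ → u → x₂ → z`) with unit capacities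
and `X = {1, 3}`. Every flow from `0` has value at most `c(0, 1) = 1`, and since each inner vertex
has a single arc in and a single arc out, a flow of value `1` carries its unit through both `1`
and `3`; so `f(X) = 2` for every maximum flow. A maximum sequence of arc-disjoint paths, on the
other hand, is the single path through all five vertices, which `l_X` counts only once.
-/

namespace NetFlow

variable {V : Type*} {N : Network V} {y z : V} {f : V → V → ℕ}

theorem IsFlow.sum_in_eq_of_unique_in [Fintype V] (hf : IsFlow N y z f) {w x : V}
    (hin : ∀ u, u ≠ w → N.c u x = 0) : ∑ u, f u x = f w x :=
  Finset.sum_eq_single w (fun u _ hu => Nat.eq_zero_of_le_zero (hin u hu ▸ hf.1 u x))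
    (by simp)

theorem IsFlow.sum_out_eq_of_unique_out [Fintype V] (hf : IsFlow N y z f) {x v : V}
    (hout : ∀ u, u ≠ v → N.c x u = 0) : ∑ u, f x u = f x v :=
  Finset.sum_eq_single v (fun u _ hu => Nat.eq_zero_of_le_zero (hout u hu ▸ hf.1 x u))
    (by simp)

theorem IsFlow.vertexFlow_eq_of_unique_in [Fintype V] [DecidableEq V] (hf : IsFlow N y z f)
    {w x : V} (hy : x ≠ y) (hz : x ≠ z) (hin : ∀ u, u ≠ w → N.c u x = 0) :
    vertexFlow f y z x = f w x := by
  rw [vertexFlow, if_neg (by tauto), ← hf.sum_in_eq_of_unique_in hin, hf.2 x hy hz]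
  push_cast
  rfl

theorem IsFlow.out_eq_in_of_unique [Fintype V] (hf : IsFlow N y z f) {w x v : V} (hy : x ≠ y)
    (hz : x ≠ z) (hin : ∀ u, u ≠ w → N.c u x = 0) (hout : ∀ u, u ≠ v → N.c x u = 0) :
    f x v = f w x := by
  rw [← hf.sum_in_eq_of_unique_in hin, ← hf.sum_out_eq_of_unique_out hout, hf.2 x hy hz]

theorem IsFlow.flowValue_eq_of_unique_out [Fintype V] (hf : IsFlow N y z f) {v : V}
    (hout : ∀ u, u ≠ v → N.c y u = 0) (hin : ∀ u, N.c u y = 0) : flowValue f y = f y v := by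
  have hzero : ∑ u, (f u y : ℤ) = 0 :=
    Finset.sum_eq_zero fun u _ => by exact_mod_cast Nat.eq_zero_of_le_zero (hin u ▸ hf.1 u y)
  rw [flowValue, hzero, sub_zero, ← hf.sum_out_eq_of_unique_out hout]
  push_cast
  rfl

theorem maxFlowValue_eq_of_forall_le [Fintype V] {m : ℕ} (hf : IsFlow N y z f)
    (hv : flowValue f y = m) (hle : ∀ g, IsFlow N y z g → flowValue g y ≤ m) :
    maxFlowValue N y z = m := by
  have hbdd : ∀ k ∈ {k : ℕ | ∃ g, IsFlow N y z g ∧ flowValue g y = k}, k ≤ m := by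
    rintro k ⟨g, hg, hk⟩
    exact_mod_cast hk ▸ hle g hg
  exact le_antisymm (csSup_le ⟨m, f, hf, hv⟩ hbdd) (le_csSup ⟨m, hbdd⟩ ⟨f, hf, hv⟩)

theorem maxSeqLen_eq_of_forall_le [DecidableEq V] {γ : List (List V)} (hγ : IsPathSeq N y z γ)
    (hle : ∀ γ', IsPathSeq N y z γ' → γ'.length ≤ γ.length) :
    maxSeqLen N y z = γ.length := by
  have hbdd : ∀ k ∈ {k : ℕ | ∃ γ', IsPathSeq N y z γ' ∧ γ'.length = k}, k ≤ γ.length := by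
    rintro k ⟨γ', hγ', rfl⟩
    exact hle γ' hγ'
  exact le_antisymm (csSup_le ⟨_, γ, hγ, rfl⟩ hbdd) (le_csSup ⟨_, hbdd⟩ ⟨γ, hγ, rfl⟩)

theorem IsPath.mem_pathArcs_of_unique_out [DecidableEq V] {p : List V} (hp : IsPath N y z p)
    {v : V} (hout : ∀ u, u ≠ v → N.c y u = 0) : (y, v) ∈ pathArcs p := by
  obtain ⟨hlen, -, hhead, -, hchain⟩ := hp
  match p, hlen with
  | a :: b :: t, _ =>
    obtain rfl : a = y := by simpa using hhead
    obtain rfl : b = v := by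
      by_contra hb
      simpa [hout b hb] using (List.isChain_cons_cons.mp hchain).1
    simp [pathArcs]

theorem IsPathSeq.length_le [DecidableEq V] {γ : List (List V)} (hγ : IsPathSeq N y z γ)
    {u v : V} (h : ∀ p ∈ γ, (u, v) ∈ pathArcs p) : γ.length ≤ N.c u v := by
  have hall : γ.countP (fun p => decide ((u, v) ∈ pathArcs p)) = γ.length :=
    List.countP_eq_length.mpr fun p hp => decide_eq_true (h p hp)
  exact hall ▸ hγ.2 u v

theorem lambdaX_le_lX [DecidableEq V] {X : Finset V} {γ : List (List V)}
    (hγ : γ ∈ MaxSeqs N y z) : lambdaX N y z X ≤ lX X γ :=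
  Nat.sInf_le ⟨γ, hγ, rfl⟩

theorem le_deltaX [Fintype V] [DecidableEq V] {X : Finset V} {n : ℕ} (hf : IsMaxFlow N y z f)
    (hle : ∀ g, IsMaxFlow N y z g → (n : ℤ) ≤ ∑ x ∈ X, vertexFlow g y z x) :
    n ≤ deltaX N y z X := by
  have hnonneg : 0 ≤ ∑ x ∈ X, vertexFlow f y z x := (Int.natCast_nonneg n).trans (hle f hf)
  refine le_csInf ⟨_, f, hf, (Int.toNat_of_nonneg hnonneg).symm⟩ ?_
  rintro k ⟨g, hg, hk⟩
  exact_mod_cast hk ▸ hle g hg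

end NetFlow

namespace UnitPath

open NetFlow

def net : Network (Fin 5) where
  c u v := if (v : ℕ) = u + 1 then 1 else 0
  no_loop v := by simp

theorem isFlow_capacity : IsFlow net 0 4 net.c :=
  ⟨fun _ _ => le_rfl, by decide⟩

theorem flowValue_le_one {f : Fin 5 → Fin 5 → ℕ} (hf : IsFlow net 0 4 f) :
    flowValue f 0 ≤ 1 := by
  rw [hf.flowValue_eq_of_unique_out (v := 1) (by decide) (by decide)]
  exact_mod_cast hf.1 0 1

theorem maxFlowValue_eq_one : maxFlowValue net 0 4 = 1 :=
  maxFlowValue_eq_of_forall_le isFlow_capacity (by decide) fun _ => flowValue_le_one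

theorem isPathSeq_singleton : IsPathSeq net 0 4 [[0, 1, 2, 3, 4]] := by
  refine ⟨?_, by decide⟩
  simp only [List.mem_singleton, forall_eq]
  refine ⟨by decide, by decide, by decide, by decide, ?_⟩
  simp only [List.Chain', List.isChain_cons_cons, List.isChain_singleton, and_true]
  decide

theorem maxSeqLen_eq_one : maxSeqLen net 0 4 = 1 :=
  maxSeqLen_eq_of_forall_le isPathSeq_singleton fun _ hγ =>
    hγ.length_le fun _ hp => (hγ.1 _ hp).mem_pathArcs_of_unique_out (v := 1) (by decide)

theorem lambdaX_le_one : lambdaX net 0 4 {1, 3} ≤ 1 :=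
  lambdaX_le_lX (γ := [[0, 1, 2, 3, 4]]) ⟨isPathSeq_singleton, maxSeqLen_eq_one.symm⟩

theorem two_le_deltaX : 2 ≤ deltaX net 0 4 {1, 3} := by
  refine le_deltaX (f := net.c) ⟨isFlow_capacity, by rw [maxFlowValue_eq_one]; decide⟩ ?_
  rintro f ⟨hf, hval⟩
  have h01 : flowValue f 0 = f 0 1 := hf.flowValue_eq_of_unique_out (by decide) (by decide)
  have h12 : f 1 2 = f 0 1 := hf.out_eq_in_of_unique (by decide) (by decide) (by decide) (by decide)
  have h23 : f 2 3 = f 1 2 := hf.out_eq_in_of_unique (by decide) (by decide) (by decide) (by decide)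
  have hX1 : vertexFlow f 0 4 1 = f 0 1 :=
    hf.vertexFlow_eq_of_unique_in (by decide) (by decide) (by decide)
  have hX3 : vertexFlow f 0 4 3 = f 2 3 :=
    hf.vertexFlow_eq_of_unique_in (by decide) (by decide) (by decide)
  rw [maxFlowValue_eq_one] at hval
  rw [Finset.sum_pair (by decide), hX1, hX3, h23, h12]
  omega

end UnitPath

/-- there is a network, a set `X` of vertices and distinct vertices `y, z`
with `δ^N_{yz}(X) > λ^N_{yz}(X)`. -/
theorem exists_delta_gt_lambda :
    ∃ (N : Network (Fin 5)) (X : Finset (Fin 5)) (y z : Fin 5),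
      y ≠ z ∧ NetFlow.lambdaX N y z X < NetFlow.deltaX N y z X :=
  ⟨UnitPath.net, {1, 3}, 0, 4, by decide,
    UnitPath.lambdaX_le_one.trans_lt (one_lt_two.trans_le UnitPath.two_le_deltaX)⟩
end
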